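/- If Z is a standard normal random variable and T = β(αZ/2 + sqrt((αZ/2)² + 1))² with α, β > 0, then the cumulative distribution function of T at t > 0 equals Φ((1/α)(sqrt(t/β) − sqrt(β/t))), where Φ is the standard normal CDF. -/

import Mathlib

open MeasureTheory ProbabilityTheory Real

lemma bs_key (u s : ℝ) (hs : 0 < s) :
    u + Real.sqrt (u ^ 2 + 1) ≤ s ↔ 2 * s * u ≤ s ^ 2 - 1 := by
  have hnn : (0:ℝ) ≤ u ^ 2 + 1 := by positivity
  have hsq : Real.sqrt (u ^ 2 + 1) ^ 2 = u ^ 2 + 1 := Real.sq_sqrt hnn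
  have hpos : 0 ≤ Real.sqrt (u ^ 2 + 1) := Real.sqrt_nonneg _
  constructor
  · intro h
    have h1 : Real.sqrt (u ^ 2 + 1) ≤ s - u := by linarith
    have h2 : u ^ 2 + 1 ≤ (s - u) ^ 2 := by nlinarith
    nlinarith
  · intro h
    have hsu : 0 < s - u := by nlinarith
    have h2 : u ^ 2 + 1 ≤ (s - u) ^ 2 := by nlinarith
    have h3 : Real.sqrt (u ^ 2 + 1) ≤ s - u := by
      calc Real.sqrt (u ^ 2 + 1) ≤ Real.sqrt ((s - u) ^ 2) := Real.sqrt_le_sqrt h2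
        _ = |s - u| := Real.sqrt_sq_eq_abs _
        _ = s - u := abs_of_pos hsu
    linarith

theorem bs_cdf
    {Ω : Type*} [MeasurableSpace Ω] (P : Measure Ω) [IsProbabilityMeasure P]
    (Z : Ω → ℝ) (hZ : Measure.map Z P = gaussianReal 0 1)
    (α β : ℝ) (hα : 0 < α) (hβ : 0 < β)
    (T : Ω → ℝ)
    (hT : ∀ ω, T ω = β * (α * Z ω / 2 + Real.sqrt ((α * Z ω / 2) ^ 2 + 1)) ^ 2)
    (t : ℝ) (ht : 0 < t) :
    P {ω | T ω ≤ t}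
      = gaussianReal 0 1 (Set.Iic ((1 / α) * (Real.sqrt (t / β) - Real.sqrt (β / t)))) := by
  have hZae : AEMeasurable Z P := by
    by_contra h
    rw [Measure.map_of_not_aemeasurable h] at hZ
    have h1 : (gaussianReal 0 1) Set.univ = 1 := measure_univ
    rw [← hZ] at h1
    simp at h1
  set s := Real.sqrt (t / β) with hs_def
  have hs : 0 < s := Real.sqrt_pos.mpr (by positivity)
  have hs2 : s ^ 2 = t / β := Real.sq_sqrt (by positivity)
  have hinv : Real.sqrt (β / t) = 1 / s := by
    have : s * Real.sqrt (β / t) = 1 := by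
      rw [hs_def, ← Real.sqrt_mul (by positivity)]
      rw [div_mul_div_comm]
      rw [mul_comm β t, div_self (by positivity)]
      exact Real.sqrt_one
    field_simp at this ⊢
    linarith
  set c := (1 / α) * (s - Real.sqrt (β / t)) with hc_def
  have hset : {ω | T ω ≤ t} = Z ⁻¹' Set.Iic c := by
    ext ω
    simp only [Set.mem_setOf_eq, Set.mem_preimage, Set.mem_Iic, hT]
    set u := α * Z ω / 2 with hu_def
    have hpos : 0 < u + Real.sqrt (u ^ 2 + 1) := by
      have hsq : Real.sqrt (u ^ 2 + 1) ^ 2 = u ^ 2 + 1 := Real.sq_sqrt (by positivity)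
      nlinarith [Real.sqrt_nonneg (u ^ 2 + 1)]
    constructor
    · intro h
      have h1 : (u + Real.sqrt (u ^ 2 + 1)) ^ 2 ≤ s ^ 2 := by
        rw [hs2, le_div_iff₀ hβ]; nlinarith
      have h2 : u + Real.sqrt (u ^ 2 + 1) ≤ s := by nlinarith
      have h3 := (bs_key u s hs).mp h2
      rw [hc_def, hinv]
      rw [hu_def] at h3
      have hss : 1 / α * (s - 1 / s) = (s ^ 2 - 1) / (α * s) := by field_simp
      rw [hss, le_div_iff₀ (by positivity)]
      nlinarith
    · intro h
      have h3 : 2 * s * u ≤ s ^ 2 - 1 := by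
        rw [hc_def, hinv] at h
        rw [hu_def]
        have h' : α * Z ω ≤ s - 1 / s := by
          have := mul_le_mul_of_nonneg_left h (le_of_lt hα)
          calc α * Z ω ≤ α * (1 / α * (s - 1 / s)) := this
            _ = s - 1 / s := by field_simp
        have h'' : α * Z ω * s ≤ (s - 1 / s) * s := by
          exact mul_le_mul_of_nonneg_right h' (le_of_lt hs)
        have : (s - 1 / s) * s = s ^ 2 - 1 := by field_simp
        nlinarith
      have h2 : u + Real.sqrt (u ^ 2 + 1) ≤ s := (bs_key u s hs).mpr h3
      have h1 : (u + Real.sqrt (u ^ 2 + 1)) ^ 2 ≤ s ^ 2 := by nlinarith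
      rw [hs2, le_div_iff₀ hβ] at h1
      nlinarith
  rw [hset, ← hZ, Measure.map_apply_of_aemeasurable hZae measurableSet_Iic]
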